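/- Assume (θ_k) is strongly mixing (P(A ∩ θ_k^{-1}B) → P(A)P(B) as ‖k‖→∞) and that ‖κ_n(t)‖ → ∞ for μ-almost every t. If τ is strongly mixing with respect to μ, then S is strongly mixing with respect to μ ⊗ P. -/

import Mathlib

/-!
By a π-λ argument it suffices to check mixing on measurable rectangles: for fixed `B` the map
`A ↦ μ (A ∩ f^[n] ⁻¹' B)` is a measure dominated by `μ`, and so is `B ↦ μ (A ∩ f^[n] ⁻¹' B)`
when `f` preserves `μ`, so dominated convergence passes the limit through complements and
disjoint unions. For rectangles, Fubini gives
`(μ ⊗ P) (A₁ ×ˢ A₂ ∩ S^[n] ⁻¹' (B₁ ×ˢ B₂)) = ∫ t in A₁ ∩ τ^[n] ⁻¹' B₁, P (A₂ ∩ θ (κₙ t) ⁻¹' B₂) ∂μ`.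
The integrand tends a.e. to `P A₂ * P B₂` because `κₙ t → ∞` and `θ` is mixing, while the
domain has measure tending to `μ A₁ * μ B₁` because `τ` is mixing.
-/

open MeasureTheory Filter Finset

/-- A measure-preserving map is strongly mixing if correlations decay. -/
def StronglyMixingMap {α : Type*} [MeasurableSpace α] (f : α → α) (m : Measure α) : Prop :=
  ∀ A B : Set α, MeasurableSet A → MeasurableSet B →
    Tendsto (fun n : ℕ => (m (A ∩ f^[n] ⁻¹' B)).toReal) atTop
      (nhds ((m A).toReal * (m B).toReal))

open Function Topology

section SetwiseConvergence

variable {α ι : Type*} {m : MeasurableSpace α}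

theorem measureReal_iUnion {μ : Measure α} [IsFiniteMeasure μ] {f : ℕ → Set α}
    (hd : Pairwise (Disjoint on f)) (hf : ∀ i, MeasurableSet (f i)) :
    μ.real (⋃ i, f i) = ∑' i, μ.real (f i) := by
  rw [measureReal_def, measure_iUnion hd hf, ENNReal.tsum_toReal_eq fun _ => measure_ne_top _ _]
  rfl

theorem tendsto_measureReal_of_isPiSystem {l : Filter ι} {ν : ι → Measure α} {ρ η : Measure α}
    [IsFiniteMeasure ρ] [IsFiniteMeasure η] {C : Set (Set α)} (hgen : m = .generateFrom C)
    (hC : IsPiSystem C) (hνρ : ∀ i, ν i ≤ ρ)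
    (huniv : Tendsto (fun i => (ν i).real Set.univ) l (𝓝 (η.real Set.univ)))
    (hCconv : ∀ s ∈ C, Tendsto (fun i => (ν i).real s) l (𝓝 (η.real s)))
    {s : Set α} (hs : MeasurableSet s) :
    Tendsto (fun i => (ν i).real s) l (𝓝 (η.real s)) := by
  have : ∀ i, IsFiniteMeasure (ν i) := fun i => isFiniteMeasure_of_le ρ (hνρ i)
  induction s, hs using MeasurableSpace.induction_on_inter hgen hC with
  | empty => simpa using tendsto_const_nhds
  | basic s hs => exact hCconv s hs
  | compl s hs ih =>
    simp_rw [measureReal_compl hs]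
    exact huniv.sub ih
  | iUnion f hd hf ih =>
    simp_rw [measureReal_iUnion hd hf]
    refine tendsto_tsum_of_dominated_convergence (summable_measure_toReal (μ := ρ) hf hd) ih
      (.of_forall fun i k => ?_)
    rw [Real.norm_of_nonneg measureReal_nonneg, measureReal_def, measureReal_def]
    exact ENNReal.toReal_mono (measure_ne_top _ _) (hνρ i _)

end SetwiseConvergence

section Mixing

variable {α : Type*} {m : MeasurableSpace α} {f : α → α} {μ : Measure α} [IsProbabilityMeasure μ]

theorem StronglyMixingMap.of_isPiSystem (hf : MeasurePreserving f μ μ) {C : Set (Set α)}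
    (hgen : m = .generateFrom C) (hC : IsPiSystem C)
    (hmix : ∀ A ∈ C, ∀ B ∈ C,
      Tendsto (fun n => μ.real (A ∩ f^[n] ⁻¹' B)) atTop (𝓝 (μ.real A * μ.real B))) :
    StronglyMixingMap f μ := by
  have hCmeas : ∀ s ∈ C, MeasurableSet s := fun s hs => hgen ▸ .basic s hs
  have hpre : ∀ n {B}, MeasurableSet B → MeasurableSet (f^[n] ⁻¹' B) :=
    fun n _ hB => hf.measurable.iterate n hB
  have hcoe : ∀ s, ((μ s).toNNReal : ℝ) = μ.real s := fun _ => rfl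
  have hleft : ∀ B, MeasurableSet B → (∀ A ∈ C,
      Tendsto (fun n => μ.real (A ∩ f^[n] ⁻¹' B)) atTop (𝓝 (μ.real A * μ.real B))) →
      ∀ A, MeasurableSet A →
      Tendsto (fun n => μ.real (A ∩ f^[n] ⁻¹' B)) atTop (𝓝 (μ.real A * μ.real B)) := by
    intro B hB hBC A hA
    have key := tendsto_measureReal_of_isPiSystem (l := atTop)
      (ν := fun n => μ.restrict (f^[n] ⁻¹' B)) (η := (μ B).toNNReal • μ) hgen hC
      (fun _ => Measure.restrict_le_self) ?_ ?_ hA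
    · simpa [measureReal_restrict_apply' (hpre _ hB), hcoe, mul_comm] using key
    · simp [(hf.iterate _).measureReal_preimage hB.nullMeasurableSet, hcoe]
    · intro s hs
      simpa [measureReal_restrict_apply' (hpre _ hB), hcoe, mul_comm] using hBC s hs
  intro A B hA hB
  show Tendsto (fun n => μ.real (A ∩ f^[n] ⁻¹' B)) atTop (𝓝 (μ.real A * μ.real B))
  have key := tendsto_measureReal_of_isPiSystem (l := atTop)
    (ν := fun n => (μ.restrict A).map f^[n]) (ρ := μ) (η := (μ A).toNNReal • μ) hgen hC
    (fun n => (Measure.map_mono Measure.restrict_le_self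
      (hf.measurable.iterate n)).trans_eq (hf.iterate n).map_eq) ?_ ?_ hB
  · simpa [map_measureReal_apply (hf.measurable.iterate _) hB,
      measureReal_restrict_apply (hpre _ hB), hcoe, Set.inter_comm] using key
  · simp [map_measureReal_apply (hf.measurable.iterate _) MeasurableSet.univ, hcoe]
  · intro s hs
    simpa [map_measureReal_apply (hf.measurable.iterate _) (hCmeas s hs),
      measureReal_restrict_apply (hpre _ (hCmeas s hs)), hcoe, Set.inter_comm]
      using hleft s (hCmeas s hs) (hmix · · s hs) A hA

end Mixing

section SetIntegral

variable {α ι E : Type*} {m : MeasurableSpace α} {μ : Measure α} [IsFiniteMeasure μ]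
  [NormedAddCommGroup E] [NormedSpace ℝ E] [CompleteSpace E]

theorem tendsto_setIntegral_of_tendsto_ae_const {l : Filter ι} [l.IsCountablyGenerated]
    {g : ι → α → E} {D : ι → Set α} {c : E} {C L : ℝ}
    (hgm : ∀ i, AEStronglyMeasurable (g i) μ) (hgC : ∀ i, ∀ᵐ x ∂μ, ‖g i x‖ ≤ C)
    (hg : ∀ᵐ x ∂μ, Tendsto (g · x) l (𝓝 c)) (hD : Tendsto (fun i => μ.real (D i)) l (𝓝 L)) :
    Tendsto (fun i => ∫ x in D i, g i x ∂μ) l (𝓝 (L • c)) := by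
  have hgi : ∀ i, Integrable (g i) μ := fun i => .of_bound (hgm i) C (hgC i)
  have hint : ∀ i, Integrable (fun x => g i x - c) μ := fun i => (hgi i).sub (integrable_const c)
  have hsplit : ∀ i, ∫ x in D i, g i x ∂μ = ∫ x in D i, (g i x - c) ∂μ + μ.real (D i) • c := by
    intro i
    rw [integral_sub (hgi i).integrableOn (integrable_const c), setIntegral_const, sub_add_cancel]
  have hL1 : Tendsto (fun i => ∫ x, ‖g i x - c‖ ∂μ) l (𝓝 0) := by
    simpa using tendsto_integral_filter_of_dominated_convergence (fun _ => C + ‖c‖)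
      (.of_forall fun i => (hint i).norm.aestronglyMeasurable)
      (.of_forall fun i => (hgC i).mono fun x hx => by
        simpa using (norm_sub_le _ _).trans (add_le_add_left hx _))
      (integrable_const _) (hg.mono fun x hx => (tendsto_sub_nhds_zero_iff.2 hx).norm)
  have herr : Tendsto (fun i => ∫ x in D i, (g i x - c) ∂μ) l (𝓝 0) :=
    squeeze_zero_norm (fun i => (norm_integral_le_integral_norm _).trans
      (setIntegral_le_integral (hint i).norm (.of_forall fun _ => norm_nonneg _))) hL1
  simpa [hsplit] using herr.add (hD.smul_const c)

end SetIntegral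

section SkewProduct

variable {M Ω K : Type*}

def skewProduct (τ : M → M) (θ : K → Ω → Ω) (κ : M → K) (p : M × Ω) : M × Ω :=
  (τ p.1, θ (κ p.1) p.2)

theorem skewProduct_iterate [AddCommMonoid K] {τ : M → M} {θ : K → Ω → Ω} (hθ0 : θ 0 = id)
    (hθadd : ∀ k l, θ k ∘ θ l = θ (k + l)) (κ : M → K) (n : ℕ) :
    (skewProduct τ θ κ)^[n] = fun p => (τ^[n] p.1, θ (birkhoffSum τ κ n p.1) p.2) := by
  induction n with
  | zero => funext p; simp [hθ0]
  | succ n ih =>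
    funext p
    rw [iterate_succ_apply', ih, iterate_succ_apply', birkhoffSum_succ,
      add_comm, ← hθadd]
    rfl

variable [MeasurableSpace M] [MeasurableSpace Ω] [MeasurableSpace K]

theorem measurable_birkhoffSum [AddCommMonoid K] [MeasurableAdd₂ K] {τ : M → M} {κ : M → K}
    (hτ : Measurable τ) (hκ : Measurable κ) (n : ℕ) : Measurable (birkhoffSum τ κ n) :=
  Finset.measurable_sum _ fun j _ => hκ.comp (hτ.iterate j)

variable [Countable K] [MeasurableSingletonClass K]

theorem measurable_uncurry_comp_of_countable {θ : K → Ω → Ω} (hθ : ∀ k, Measurable (θ k))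
    {κ : M → K} (hκ : Measurable κ) : Measurable (uncurry fun t => θ (κ t)) :=
  (measurable_from_prod_countable_right (f := uncurry θ) hθ).comp
    ((hκ.comp measurable_fst).prodMk measurable_snd)

theorem measurePreserving_skewProduct {μ : Measure M} {P : Measure Ω} [SFinite μ] [SFinite P]
    {τ : M → M} {θ : K → Ω → Ω} {κ : M → K} (hτ : MeasurePreserving τ μ μ)
    (hθ : ∀ k, MeasurePreserving (θ k) P P) (hκ : Measurable κ) :
    MeasurePreserving (skewProduct τ θ κ) (μ.prod P) (μ.prod P) :=
  hτ.skew_product (measurable_uncurry_comp_of_countable (fun k => (hθ k).measurable) hκ)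
    (.of_forall fun t => (hθ (κ t)).map_eq)

end SkewProduct

section ProdMeasure

variable {M Ω M' Ω' : Type*} [MeasurableSpace M] [MeasurableSpace Ω] [MeasurableSpace M']
  [MeasurableSpace Ω'] {μ : Measure M} {P : Measure Ω} [IsFiniteMeasure P]

theorem measureReal_prod_inter_preimage_prod {f : M → M'} {g : M → Ω → Ω'} (hf : Measurable f)
    (hg : Measurable (uncurry g)) {A₁ : Set M} {A₂ : Set Ω} {B₁ : Set M'} {B₂ : Set Ω'}
    (hA₁ : MeasurableSet A₁) (hA₂ : MeasurableSet A₂) (hB₁ : MeasurableSet B₁)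
    (hB₂ : MeasurableSet B₂) :
    (μ.prod P).real (A₁ ×ˢ A₂ ∩ (fun p => (f p.1, g p.1 p.2)) ⁻¹' (B₁ ×ˢ B₂)) =
      ∫ t in A₁ ∩ f ⁻¹' B₁, P.real (A₂ ∩ g t ⁻¹' B₂) ∂μ := by
  have hF : Measurable fun p : M × Ω => (f p.1, g p.1 p.2) := (hf.comp measurable_fst).prodMk hg
  have hD : MeasurableSet (A₁ ∩ f ⁻¹' B₁) := hA₁.inter (hf hB₁)
  have hslice : ∀ t, P (Prod.mk t ⁻¹' (A₁ ×ˢ A₂ ∩ (fun p => (f p.1, g p.1 p.2)) ⁻¹' (B₁ ×ˢ B₂)))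
      = (A₁ ∩ f ⁻¹' B₁).indicator (fun t => P (A₂ ∩ g t ⁻¹' B₂)) t := by
    intro t
    by_cases ht : t ∈ A₁ ∩ f ⁻¹' B₁
    · rw [Set.indicator_of_mem ht]
      congr 1 with ω
      simp [ht.1, ht.2.out]
    · rw [Set.indicator_of_notMem ht, ← measure_empty (μ := P)]
      congr 1 with ω
      simpa using fun h₁ _ h₂ _ => ht ⟨h₁, h₂⟩
  have hfiber : Measurable fun t => P (A₂ ∩ g t ⁻¹' B₂) :=
    measurable_measure_prodMk_left ((hA₂.preimage measurable_snd).inter (hg hB₂))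
  rw [measureReal_def, Measure.prod_apply ((hA₁.prod hA₂).inter (hF (hB₁.prod hB₂))),
    lintegral_congr hslice, lintegral_indicator hD,
    ← integral_toReal hfiber.aemeasurable (.of_forall fun _ => measure_lt_top _ _)]
  rfl

end ProdMeasure

section SkewProductMixing

variable {M Ω K : Type*} [MeasurableSpace M] [MeasurableSpace Ω] [AddCommMonoid K]
  [MeasurableSpace K] [MeasurableAdd₂ K] [Countable K] [MeasurableSingletonClass K]
  {μ : Measure M} {P : Measure Ω} [IsFiniteMeasure μ] [IsFiniteMeasure P]
  {τ : M → M} {θ : K → Ω → Ω} {κ : M → K} {l : Filter K}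

theorem tendsto_measureReal_prod_inter_preimage_skewProduct_iterate (hθ0 : θ 0 = id)
    (hθadd : ∀ k l, θ k ∘ θ l = θ (k + l)) (hθ : ∀ k, Measurable (θ k))
    (hθmix : ∀ A B, MeasurableSet A → MeasurableSet B →
      Tendsto (fun k => P.real (A ∩ θ k ⁻¹' B)) l (𝓝 (P.real A * P.real B)))
    (hτ : Measurable τ) (hτmix : StronglyMixingMap τ μ) (hκ : Measurable κ)
    (hκl : ∀ᵐ t ∂μ, Tendsto (birkhoffSum τ κ · t) atTop l)
    {A₁ B₁ : Set M} {A₂ B₂ : Set Ω} (hA₁ : MeasurableSet A₁) (hA₂ : MeasurableSet A₂)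
    (hB₁ : MeasurableSet B₁) (hB₂ : MeasurableSet B₂) :
    Tendsto (fun n => (μ.prod P).real (A₁ ×ˢ A₂ ∩ (skewProduct τ θ κ)^[n] ⁻¹' (B₁ ×ˢ B₂)))
      atTop (𝓝 ((μ.prod P).real (A₁ ×ˢ A₂) * (μ.prod P).real (B₁ ×ˢ B₂))) := by
  have hfiber : ∀ n, Measurable fun t => P.real (A₂ ∩ θ (birkhoffSum τ κ n t) ⁻¹' B₂) :=
    fun n => (measurable_of_countable fun k => P.real (A₂ ∩ θ k ⁻¹' B₂)).comp
      (measurable_birkhoffSum hτ hκ n)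
  have heq : ∀ n, (μ.prod P).real (A₁ ×ˢ A₂ ∩ (skewProduct τ θ κ)^[n] ⁻¹' (B₁ ×ˢ B₂)) =
      ∫ t in A₁ ∩ τ^[n] ⁻¹' B₁, P.real (A₂ ∩ θ (birkhoffSum τ κ n t) ⁻¹' B₂) ∂μ := fun n => by
    rw [skewProduct_iterate hθ0 hθadd]
    exact measureReal_prod_inter_preimage_prod (hτ.iterate n)
      (measurable_uncurry_comp_of_countable hθ (measurable_birkhoffSum hτ hκ n)) hA₁ hA₂ hB₁ hB₂
  have hlim := tendsto_setIntegral_of_tendsto_ae_const (C := P.real Set.univ)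
    (fun n => (hfiber n).aestronglyMeasurable)
    (fun n => .of_forall fun t => by
      rw [Real.norm_of_nonneg measureReal_nonneg]
      exact measureReal_mono (Set.subset_univ _))
    (hκl.mono fun t ht => (hθmix A₂ B₂ hA₂ hB₂).comp ht) (hτmix A₁ B₁ hA₁ hB₁)
  simp_rw [heq, measureReal_prod_prod]
  convert hlim using 2
  simp only [smul_eq_mul, measureReal_def]
  ring

end SkewProductMixing

theorem skew_product_stronglyMixing_general
    {M Ω : Type*} [MeasurableSpace M] [MeasurableSpace Ω] {d : ℕ}
    (μ : Measure M) (P : Measure Ω) [IsProbabilityMeasure μ] [IsProbabilityMeasure P]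
    (θ : (Fin d → ℕ) → Ω → Ω)
    (hθ0 : θ 0 = id)
    (hθadd : ∀ k l : Fin d → ℕ, θ k ∘ θ l = θ (k + l))
    (hθmp : ∀ k, MeasurePreserving (θ k) P P)
    -- `(θ_k)` is strongly mixing: correlations decay as `‖k‖ → ∞`
    (hθmix : ∀ A B : Set Ω, MeasurableSet A → MeasurableSet B →
      Tendsto (fun k : Fin d → ℕ => (P (A ∩ θ k ⁻¹' B)).toReal) cofinite
        (nhds ((P A).toReal * (P B).toReal)))
    (τ : M → M) (hτ : MeasurePreserving τ μ μ)
    (κ : M → Fin d → ℕ) (hκ : Measurable κ)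
    -- `‖κ_n(t)‖ → ∞` for μ-a.e. t
    (hκinf : ∀ᵐ t ∂μ, Tendsto (fun n : ℕ => ∑ j ∈ Finset.range n, κ (τ^[j] t)) atTop cofinite)
    (hsmτ : StronglyMixingMap τ μ) :
    StronglyMixingMap (fun p : M × Ω => (τ p.1, θ (κ p.1) p.2)) (μ.prod P) := by
  refine StronglyMixingMap.of_isPiSystem (measurePreserving_skewProduct hτ hθmp hκ)
    generateFrom_prod.symm isPiSystem_prod ?_
  rintro _ ⟨A₁, hA₁, A₂, hA₂, rfl⟩ _ ⟨B₁, hB₁, B₂, hB₂, rfl⟩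
  exact tendsto_measureReal_prod_inter_preimage_skewProduct_iterate hθ0 hθadd
    (fun k => (hθmp k).measurable) hθmix hτ.measurable hsmτ hκ hκinf hA₁ hA₂ hB₁ hB₂

/-- if the semigroup `(θ_k)` is strongly mixing (correlations decay as
`‖k‖ → ∞`, i.e. along the cofinite filter on `ℕ^d`), `‖κ_n(t)‖ → ∞` for μ-a.e. `t`,
and `τ` is strongly mixing, then the skew product `S` is strongly mixing w.r.t. `μ ⊗ P`. -/
theorem skew_product_stronglyMixing
    {M Ω : Type*} [MeasurableSpace M] [MeasurableSpace Ω] {d : ℕ}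
    (μ : Measure M) (P : Measure Ω) [IsProbabilityMeasure μ] [IsProbabilityMeasure P]
    (θ : (Fin d → ℕ) → Ω → Ω)
    (hθ0 : θ 0 = id)
    (hθadd : ∀ k l : Fin d → ℕ, θ k ∘ θ l = θ (k + l))
    (hθmeas : ∀ k, Measurable (θ k))
    (hθmp : ∀ k, MeasurePreserving (θ k) P P)
    -- `(θ_k)` is strongly mixing: correlations decay as `‖k‖ → ∞`
    (hθmix : ∀ A B : Set Ω, MeasurableSet A → MeasurableSet B →
      Tendsto (fun k : Fin d → ℕ => (P (A ∩ θ k ⁻¹' B)).toReal) cofinite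
        (nhds ((P A).toReal * (P B).toReal)))
    (τ : M → M) (hτ : MeasurePreserving τ μ μ)
    (κ : M → Fin d → ℕ) (hκ : Measurable κ)
    -- `‖κ_n(t)‖ → ∞` for μ-a.e. t
    (hκinf : ∀ᵐ t ∂μ, Tendsto (fun n : ℕ => ∑ j ∈ Finset.range n, κ (τ^[j] t)) atTop cofinite)
    (hsmτ : StronglyMixingMap τ μ) :
    StronglyMixingMap (fun p : M × Ω => (τ p.1, θ (κ p.1) p.2)) (μ.prod P) :=
  skew_product_stronglyMixing_general μ P θ hθ0 hθadd hθmp hθmix τ hτ κ hκ hκinf hsmτ
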